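/- The equilateral Lagrange configuration of the Lennard-Jones 3-body problem: Let q₀₄ = (1/√3)·((1,0), (cos(2π/3), sin(2π/3)), (cos(4π/3), sin(4π/3))) ∈ Ω. Then ∇U(q₀₄) = 0, U(q₀₄) = −3, and the Hessian ∇²U(q₀₄), regarded as a symmetric 6×6 real matrix, has spectrum σ(∇²U(q₀₄)) = {0, 108, 216} with multiplicities mult(0) = 3, mult(108) = 2 and mult(216) = 1. -/

import Mathlib

open Real Polynomial

/-- Configuration space of three point particles in the plane. -/
noncomputable abbrev LJConf3 := PiLp 2 fun _ : Fin 3 => EuclideanSpace ℝ (Fin 2)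

/-- The Lennard-Jones three-body potential
`U(q) = Σ_{1 ≤ i < j ≤ 3} (‖q_i − q_j‖⁻¹² − 2‖q_i − q_j‖⁻⁶)`. -/
noncomputable def lj3 (q : LJConf3) : ℝ :=
  (‖q 0 - q 1‖ ^ (-12 : ℤ) - 2 * ‖q 0 - q 1‖ ^ (-6 : ℤ)) +
  (‖q 0 - q 2‖ ^ (-12 : ℤ) - 2 * ‖q 0 - q 2‖ ^ (-6 : ℤ)) +
  (‖q 1 - q 2‖ ^ (-12 : ℤ) - 2 * ‖q 1 - q 2‖ ^ (-6 : ℤ))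

/-- The equilateral Lagrange configuration
`q₀₄ = (1/√3)·((1,0), (cos(2π/3), sin(2π/3)), (cos(4π/3), sin(4π/3)))`. -/
noncomputable def ljq₀₄ : LJConf3 :=
  WithLp.toLp 2 ![!₂[1 / Real.sqrt 3, 0],
    !₂[(1 / Real.sqrt 3) * Real.cos (2 * π / 3), (1 / Real.sqrt 3) * Real.sin (2 * π / 3)],
    !₂[(1 / Real.sqrt 3) * Real.cos (4 * π / 3), (1 / Real.sqrt 3) * Real.sin (4 * π / 3)]]

/-- The Hessian `∇²U(q₀₄)` of the Lennard-Jones 3-body potential at `q₀₄`, as an endomorphism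
of the (6-dimensional) configuration space. -/
noncomputable def ljHess3 : LJConf3 →ₗ[ℝ] LJConf3 := (fderiv ℝ (gradient lj3) ljq₀₄ : _)

/-!
Each term of `U` is `V(q_i - q_j)` with `V(u) = φ(‖u‖²)`, `φ(s) = s⁻⁶ - 2s⁻³`. At unit length
`∇V(u) = 0` and `∇²V(u) = 72 u uᵀ`, so at a configuration whose three sides have length one (such
as `q₀₄`) the gradient of `U` vanishes, `U = -3`, and by the chain rule through the linear maps
`q ↦ q_i - q_j` the Hessian is `72 Σ_{i<j} b_ij b_ijᵀ` with `b_ij = (e_i - e_j) ⊗ (q_i - q_j)`.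
For `q₀₄` this operator has an explicit orthogonal eigenbasis with eigenvalues `0, 0, 0, 108, 108,
216`, which gives the characteristic polynomial, the spectrum and the multiplicities.
-/

open scoped RealInnerProductSpace InnerProduct

lemma ne_of_norm_sub_eq_one {E : Type*} [NormedAddCommGroup E] {u v : E} (h : ‖u - v‖ = 1) :
    u ≠ v :=
  fun huv => by simp [huv] at h

lemma EuclideanSpace.norm_vec2_eq_one {a b : ℝ} (h : a ^ 2 + b ^ 2 = 1) : ‖!₂[a, b]‖ = 1 := by
  simp [EuclideanSpace.norm_eq, h]

lemma PiLp.inner_single_left {ι 𝕜 : Type*} [RCLike 𝕜] [Fintype ι] [DecidableEq ι]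
    {E : ι → Type*} [∀ i, NormedAddCommGroup (E i)] [∀ i, InnerProductSpace 𝕜 (E i)] (i : ι)
    (v : E i) (x : PiLp 2 E) : inner 𝕜 (PiLp.single 2 i v) x = inner 𝕜 v (x i) := by
  rw [PiLp.inner_apply, Fintype.sum_eq_single i]
  · simp
  · intro j hj
    simp [hj]

open ContinuousLinearMap in
lemma HasGradientAt.comp_clm {F G : Type*} [NormedAddCommGroup F] [InnerProductSpace ℝ F]
    [CompleteSpace F] [NormedAddCommGroup G] [InnerProductSpace ℝ G] [CompleteSpace G]
    {f : G → ℝ} {g : G} (L : F →L[ℝ] G) {x : F} (hf : HasGradientAt f g (L x)) :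
    HasGradientAt (f ∘ L) ((L†) g) x := by
  rw [hasGradientAt_iff_hasFDerivAt] at hf ⊢
  refine (hf.comp x L.hasFDerivAt).congr_fderiv ?_
  ext y
  simp [adjoint_inner_left]

lemma LinearMap.charpoly_eq_prod_of_basis_eigenvectors {R M ι : Type*} [CommRing R]
    [AddCommGroup M] [Module R M] [Module.Free R M] [Module.Finite R M] [Fintype ι]
    [DecidableEq ι] (f : M →ₗ[R] M) (b : Module.Basis ι R M) (μ : ι → R)
    (hf : ∀ i, f (b i) = μ i • b i) :
    f.charpoly = ∏ i, (X - C (μ i)) := by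
  have hmat : LinearMap.toMatrix b b f = Matrix.diagonal μ := by
    ext i j
    rw [LinearMap.toMatrix_apply, hf, map_smul, b.repr_self, Finsupp.smul_apply,
      Finsupp.single_apply, Matrix.diagonal_apply]
    split_ifs with h₁ h₂ h₂ <;> simp_all [eq_comm]
  rw [← LinearMap.charpoly_toMatrix f b, hmat, Matrix.charpoly_diagonal]

lemma Polynomial.rootMultiplicity_mul_X_sub_C_pow_of_not_isRoot {R : Type*} [CommRing R]
    {p : R[X]} {a : R} (hp : ¬p.IsRoot a) (n : ℕ) :
    (p * (X - C a) ^ n).rootMultiplicity a = n := by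
  rw [rootMultiplicity_mul_X_sub_C_pow (by rintro rfl; exact hp (by simp)),
    rootMultiplicity_eq_zero hp, zero_add]

section PairPotential

variable {E : Type*} [NormedAddCommGroup E]

noncomputable def ljPair (u : E) : ℝ := ‖u‖ ^ (-12 : ℤ) - 2 * ‖u‖ ^ (-6 : ℤ)

noncomputable def ljGradientCoeff (s : ℝ) : ℝ := 12 * s ^ (-4 : ℤ) - 12 * s ^ (-7 : ℤ)

lemma ljPair_eq (u : E) :
    ljPair u = (‖u‖ ^ 2) ^ (-6 : ℤ) - 2 * (‖u‖ ^ 2) ^ (-3 : ℤ) := by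
  simp only [ljPair, ← zpow_natCast, ← zpow_mul]
  norm_num

lemma ljPair_of_norm_eq_one {u : E} (hu : ‖u‖ = 1) : ljPair u = -1 := by
  norm_num [ljPair, hu]

lemma hasDerivAt_ljGradientCoeff {s : ℝ} (hs : s ≠ 0) :
    HasDerivAt ljGradientCoeff (-48 * s ^ (-5 : ℤ) + 84 * s ^ (-8 : ℤ)) s := by
  have h := ((hasDerivAt_zpow (-4) s (Or.inl hs)).const_mul 12).sub
    ((hasDerivAt_zpow (-7) s (Or.inl hs)).const_mul 12)
  refine h.congr_deriv ?_
  norm_num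
  ring

variable [InnerProductSpace ℝ E]

noncomputable def ljPairGradient (u : E) : E := ljGradientCoeff (‖u‖ ^ 2) • u

lemma ljPairGradient_of_norm_eq_one {u : E} (hu : ‖u‖ = 1) : ljPairGradient u = 0 := by
  simp [ljPairGradient, ljGradientCoeff, hu]

lemma hasFDerivAt_ljPairGradient_of_norm_eq_one {u : E} (hu : ‖u‖ = 1) :
    HasFDerivAt ljPairGradient ((72 : ℝ) • InnerProductSpace.rankOne ℝ u u) u := by
  have hc := (hasDerivAt_ljGradientCoeff (s := ‖u‖ ^ 2) (by simp [hu])).comp_hasFDerivAt u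
    (hasStrictFDerivAt_norm_sq u).hasFDerivAt
  refine (hc.smul (hasFDerivAt_id u)).congr_fderiv ?_
  ext y
  simp [hu, ljGradientCoeff]
  module

variable [CompleteSpace E]

lemma hasGradientAt_ljPair {u : E} (hu : u ≠ 0) : HasGradientAt ljPair (ljPairGradient u) u := by
  have hs : ‖u‖ ^ 2 ≠ 0 := by positivity
  have hφ : HasDerivAt (fun s : ℝ => s ^ (-6 : ℤ) - 2 * s ^ (-3 : ℤ))
      (ljGradientCoeff (‖u‖ ^ 2) / 2) (‖u‖ ^ 2) := by
    have h := (hasDerivAt_zpow (-6) _ (Or.inl hs)).sub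
      ((hasDerivAt_zpow (-3) _ (Or.inl hs)).const_mul 2)
    refine h.congr_deriv ?_
    norm_num [ljGradientCoeff]
    ring
  rw [hasGradientAt_iff_hasFDerivAt, _root_.funext ljPair_eq]
  refine (hφ.comp_hasFDerivAt u (hasStrictFDerivAt_norm_sq u).hasFDerivAt).congr_fderiv ?_
  ext y
  simp [ljPairGradient]
  ring

end PairPotential

local notation "E2" => EuclideanSpace ℝ (Fin 2)

namespace LJConf3

-- A shortcut: without it, `HasFDerivAt.fderiv` on `LJConf3` times out while unifying the
-- `ContinuousSMul` instance with the module structure of `PiLp`.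
instance : ContinuousSMul ℝ LJConf3 := inferInstance

open ContinuousLinearMap InnerProductSpace

noncomputable def pairDiff (i j : Fin 3) : LJConf3 →L[ℝ] E2 :=
  PiLp.proj (𝕜 := ℝ) 2 (fun _ : Fin 3 => E2) i -
    PiLp.proj (𝕜 := ℝ) 2 (fun _ : Fin 3 => E2) j

@[simp] lemma pairDiff_apply (i j : Fin 3) (q : LJConf3) : pairDiff i j q = q i - q j := rfl

lemma lj3_eq (q : LJConf3) :
    lj3 q = ljPair (pairDiff 0 1 q) + ljPair (pairDiff 0 2 q) + ljPair (pairDiff 1 2 q) := rfl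

noncomputable def lj3Gradient (q : LJConf3) : LJConf3 :=
  ((pairDiff 0 1)†) (ljPairGradient (pairDiff 0 1 q)) +
    ((pairDiff 0 2)†) (ljPairGradient (pairDiff 0 2 q)) +
    ((pairDiff 1 2)†) (ljPairGradient (pairDiff 1 2 q))

lemma hasGradientAt_lj3 {q : LJConf3} (h01 : q 0 ≠ q 1) (h02 : q 0 ≠ q 2) (h12 : q 1 ≠ q 2) :
    HasGradientAt lj3 (lj3Gradient q) q := by
  have hpair (i j : Fin 3) (hij : q i ≠ q j) :=
    ((hasGradientAt_ljPair (sub_ne_zero.mpr hij)).comp_clm (pairDiff i j)).hasFDerivAt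
  rw [hasGradientAt_iff_hasFDerivAt, lj3Gradient, map_add, map_add]
  exact ((hpair 0 1 h01).add (hpair 0 2 h02)).add (hpair 1 2 h12)

lemma gradient_lj3_eventuallyEq {q : LJConf3} (h01 : q 0 ≠ q 1) (h02 : q 0 ≠ q 2)
    (h12 : q 1 ≠ q 2) : gradient lj3 =ᶠ[nhds q] lj3Gradient := by
  have hopen (i j : Fin 3) : IsOpen {p : LJConf3 | p i ≠ p j} :=
    isOpen_ne_fun (PiLp.proj (𝕜 := ℝ) 2 (fun _ : Fin 3 => E2) i).continuous
      (PiLp.proj (𝕜 := ℝ) 2 (fun _ : Fin 3 => E2) j).continuous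
  filter_upwards [(hopen 0 1).mem_nhds h01, (hopen 0 2).mem_nhds h02, (hopen 1 2).mem_nhds h12]
    with p hp01 hp02 hp12
  exact (hasGradientAt_lj3 hp01 hp02 hp12).gradient

lemma pairDiff_adjoint_apply (i j : Fin 3) (v : E2) :
    ((pairDiff i j)†) v = PiLp.single 2 i v - PiLp.single 2 j v := by
  refine ext_inner_right ℝ fun x => ?_
  simp [adjoint_inner_left, inner_sub_left, inner_sub_right, PiLp.inner_single_left]

noncomputable def bondVector (i j : Fin 3) (q : LJConf3) : LJConf3 :=
  ((pairDiff i j)†) (q i - q j)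

noncomputable def unitTriangleHessian (q : LJConf3) : LJConf3 →L[ℝ] LJConf3 :=
  (72 : ℝ) • (rankOne ℝ (bondVector 0 1 q) (bondVector 0 1 q) +
    rankOne ℝ (bondVector 0 2 q) (bondVector 0 2 q) +
    rankOne ℝ (bondVector 1 2 q) (bondVector 1 2 q))

lemma unitTriangleHessian_apply (q x : LJConf3) :
    unitTriangleHessian q x = (72 : ℝ) •
      (⟪q 0 - q 1, x 0 - x 1⟫ • (PiLp.single 2 0 (q 0 - q 1) - PiLp.single 2 1 (q 0 - q 1)) +
        ⟪q 0 - q 2, x 0 - x 2⟫ • (PiLp.single 2 0 (q 0 - q 2) - PiLp.single 2 2 (q 0 - q 2)) +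
        ⟪q 1 - q 2, x 1 - x 2⟫ • (PiLp.single 2 1 (q 1 - q 2) - PiLp.single 2 2 (q 1 - q 2))) := by
  simp only [unitTriangleHessian, smul_apply, add_apply, rankOne_apply, bondVector,
    adjoint_inner_left, pairDiff_apply]
  simp only [pairDiff_adjoint_apply]

section UnitTriangle

variable {q : LJConf3} (h01 : ‖q 0 - q 1‖ = 1) (h02 : ‖q 0 - q 2‖ = 1)
  (h12 : ‖q 1 - q 2‖ = 1)
include h01 h02 h12

lemma lj3_of_unit_sides : lj3 q = -3 := by
  rw [lj3_eq]
  norm_num [ljPair_of_norm_eq_one, h01, h02, h12]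

lemma gradient_lj3_of_unit_sides : gradient lj3 q = 0 := by
  rw [(hasGradientAt_lj3 (ne_of_norm_sub_eq_one h01) (ne_of_norm_sub_eq_one h02)
    (ne_of_norm_sub_eq_one h12)).gradient]
  simp [lj3Gradient, ljPairGradient_of_norm_eq_one, h01, h02, h12]

lemma hasFDerivAt_lj3Gradient_of_unit_sides :
    HasFDerivAt lj3Gradient (unitTriangleHessian q) q := by
  have hpair (i j : Fin 3) (hij : ‖q i - q j‖ = 1) :
      HasFDerivAt (fun p => ((pairDiff i j)†) (ljPairGradient (pairDiff i j p)))
        ((72 : ℝ) • rankOne ℝ (bondVector i j q) (bondVector i j q)) q := by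
    have h := ((pairDiff i j)†).hasFDerivAt.comp q
      ((hasFDerivAt_ljPairGradient_of_norm_eq_one hij).comp q (pairDiff i j).hasFDerivAt)
    refine h.congr_fderiv ?_
    rw [ContinuousLinearMap.smul_comp, comp_smul, rankOne_comp, comp_rankOne]
    rfl
  rw [unitTriangleHessian, smul_add, smul_add]
  exact ((hpair 0 1 h01).add (hpair 0 2 h02)).add (hpair 1 2 h12)

lemma fderiv_gradient_lj3_of_unit_sides :
    fderiv ℝ (gradient lj3) q = unitTriangleHessian q := by
  rw [(gradient_lj3_eventuallyEq (ne_of_norm_sub_eq_one h01) (ne_of_norm_sub_eq_one h02)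
    (ne_of_norm_sub_eq_one h12)).fderiv_eq]
  exact (hasFDerivAt_lj3Gradient_of_unit_sides h01 h02 h12).fderiv

end UnitTriangle

lemma ljq₀₄_eq : ljq₀₄ = WithLp.toLp 2
    ![!₂[√3 / 3, 0], !₂[-(√3 / 6), 1 / 2], !₂[-(√3 / 6), -(1 / 2)]] := by
  have h2π : 2 * π / 3 = π - π / 3 := by ring
  have h4π : 4 * π / 3 = π / 3 + π := by ring
  have h3 : √3 * √3 = 3 := Real.mul_self_sqrt (by norm_num)
  have h0 : √3 ≠ 0 := by positivity
  ext i j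
  fin_cases i <;> fin_cases j <;>
    simp [ljq₀₄, h2π, h4π, Real.cos_pi_sub, Real.sin_pi_sub, Real.cos_add_pi,
      Real.sin_add_pi] <;>
    field_simp <;> linarith

lemma ljq₀₄_sub_01 : ljq₀₄ 0 - ljq₀₄ 1 = !₂[√3 / 2, -(1 / 2)] := by
  ext j; fin_cases j <;> norm_num [ljq₀₄_eq, Matrix.cons_val_two]; ring

lemma ljq₀₄_sub_02 : ljq₀₄ 0 - ljq₀₄ 2 = !₂[√3 / 2, 1 / 2] := by
  ext j; fin_cases j <;> norm_num [ljq₀₄_eq, Matrix.cons_val_two]; ring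

lemma ljq₀₄_sub_12 : ljq₀₄ 1 - ljq₀₄ 2 = !₂[0, 1] := by
  ext j; fin_cases j <;> norm_num [ljq₀₄_eq, Matrix.cons_val_two]

lemma norm_ljq₀₄_sub_01 : ‖ljq₀₄ 0 - ljq₀₄ 1‖ = 1 := by
  rw [ljq₀₄_sub_01]; exact EuclideanSpace.norm_vec2_eq_one (by norm_num [div_pow])

lemma norm_ljq₀₄_sub_02 : ‖ljq₀₄ 0 - ljq₀₄ 2‖ = 1 := by
  rw [ljq₀₄_sub_02]; exact EuclideanSpace.norm_vec2_eq_one (by norm_num [div_pow])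

lemma norm_ljq₀₄_sub_12 : ‖ljq₀₄ 1 - ljq₀₄ 2‖ = 1 := by
  rw [ljq₀₄_sub_12]; exact EuclideanSpace.norm_vec2_eq_one (by norm_num)

lemma ljHess3_eq : ljHess3 = unitTriangleHessian ljq₀₄ := by
  rw [ljHess3, fderiv_gradient_lj3_of_unit_sides norm_ljq₀₄_sub_01 norm_ljq₀₄_sub_02
    norm_ljq₀₄_sub_12]

-- The two translations, the rotation, two modes of eigenvalue `108`, and the dilation.
noncomputable def ljEigenvector : Fin 6 → LJConf3 :=
  ![WithLp.toLp 2 ![!₂[1, 0], !₂[1, 0], !₂[1, 0]],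
    WithLp.toLp 2 ![!₂[0, 1], !₂[0, 1], !₂[0, 1]],
    WithLp.toLp 2 ![!₂[0, 2], !₂[-√3, -1], !₂[√3, -1]],
    WithLp.toLp 2 ![!₂[2, 0], !₂[-1, -√3], !₂[-1, √3]],
    WithLp.toLp 2 ![!₂[0, 2], !₂[√3, -1], !₂[-√3, -1]],
    WithLp.toLp 2 ![!₂[2, 0], !₂[-1, √3], !₂[-1, -√3]]]

def ljEigenvalue : Fin 6 → ℝ := ![0, 0, 0, 108, 108, 216]

lemma ljHess3_ljEigenvector (k : Fin 6) :
    ljHess3 (ljEigenvector k) = ljEigenvalue k • ljEigenvector k := by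
  have h3 : √3 ^ 2 = 3 := Real.sq_sqrt (by norm_num)
  have h3' : √3 ^ 3 = 3 * √3 := by rw [pow_succ, h3]
  rw [ljHess3_eq, coe_coe, unitTriangleHessian_apply, ljq₀₄_sub_01, ljq₀₄_sub_02,
    ljq₀₄_sub_12]
  ext i c
  fin_cases k <;> fin_cases i <;> fin_cases c <;>
    simp [ljEigenvector, ljEigenvalue, PiLp.inner_apply, Fin.sum_univ_two,
      Matrix.cons_val_two] <;> ring_nf <;> norm_num [h3, h3'] <;> ring

lemma ljEigenvector_ne_zero (k : Fin 6) : ljEigenvector k ≠ 0 := by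
  rw [← inner_self_ne_zero (𝕜 := ℝ)]
  have h3 : √3 ^ 2 = 3 := Real.sq_sqrt (by norm_num)
  fin_cases k <;> norm_num [ljEigenvector, PiLp.inner_apply, Fin.sum_univ_three,
    Matrix.cons_val_two, h3]

lemma pairwise_inner_ljEigenvector :
    Pairwise fun k l => ⟪ljEigenvector k, ljEigenvector l⟫ = 0 := by
  intro k l hkl
  fin_cases k <;> fin_cases l <;> simp at hkl <;>
    norm_num [ljEigenvector, PiLp.inner_apply, Fin.sum_univ_three, Matrix.cons_val_two]

lemma finrank_ljConf3 : Module.finrank ℝ LJConf3 = 6 := by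
  simp [(WithLp.linearEquiv 2 ℝ (Fin 3 → EuclideanSpace ℝ (Fin 2))).finrank_eq,
    Module.finrank_pi_fintype]

noncomputable def ljEigenbasis : Module.Basis (Fin 6) ℝ LJConf3 :=
  basisOfLinearIndependentOfCardEqFinrank
    (linearIndependent_of_ne_zero_of_inner_eq_zero ljEigenvector_ne_zero
      pairwise_inner_ljEigenvector)
    (by simp [finrank_ljConf3])

lemma charpoly_ljHess3 : ljHess3.charpoly = X ^ 3 * (X - C 108) ^ 2 * (X - C 216) := by
  rw [ljHess3.charpoly_eq_prod_of_basis_eigenvectors ljEigenbasis ljEigenvalue (fun k => by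
    simpa [ljEigenbasis] using ljHess3_ljEigenvector k)]
  simp only [Fin.prod_univ_six, ljEigenvalue, Matrix.cons_val, map_zero, sub_zero]
  ring

lemma spectrum_ljHess3 : spectrum ℝ ljHess3 = {0, 108, 216} := by
  ext μ
  rw [Module.End.mem_spectrum_iff_isRoot_charpoly, charpoly_ljHess3]
  simp [sub_eq_zero, or_assoc]

end LJConf3

/-- **The equilateral Lagrange configuration of the Lennard-Jones 3-body problem.**
`∇U(q₀₄) = 0`, `U(q₀₄) = −3`, and the Hessian `∇²U(q₀₄)` has spectrum `{0, 108, 216}` with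
multiplicities `3`, `2`, `1`; equivalently its characteristic polynomial is
`x³(x − 108)²(x − 216)`. -/
theorem lennard_jones_three_body_lagrange_configuration :
    gradient lj3 ljq₀₄ = 0 ∧
    lj3 ljq₀₄ = -3 ∧
    spectrum ℝ ljHess3 = {0, 108, 216} ∧
    LinearMap.charpoly ljHess3 = X ^ 3 * (X - C 108) ^ 2 * (X - C 216) ∧
    (LinearMap.charpoly ljHess3).rootMultiplicity 0 = 3 ∧
    (LinearMap.charpoly ljHess3).rootMultiplicity 108 = 2 ∧
    (LinearMap.charpoly ljHess3).rootMultiplicity 216 = 1 := by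
  open LJConf3 in
  refine ⟨gradient_lj3_of_unit_sides norm_ljq₀₄_sub_01 norm_ljq₀₄_sub_02 norm_ljq₀₄_sub_12,
    lj3_of_unit_sides norm_ljq₀₄_sub_01 norm_ljq₀₄_sub_02 norm_ljq₀₄_sub_12, spectrum_ljHess3,
    charpoly_ljHess3, ?_, ?_, ?_⟩ <;> rw [charpoly_ljHess3]
  · rw [show (X : ℝ[X]) ^ 3 * (X - C 108) ^ 2 * (X - C 216)
        = ((X - C 108) ^ 2 * (X - C 216)) * (X - C 0) ^ 3 by rw [map_zero, sub_zero]; ring]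
    exact rootMultiplicity_mul_X_sub_C_pow_of_not_isRoot (by norm_num) 3
  · rw [show (X : ℝ[X]) ^ 3 * (X - C 108) ^ 2 * (X - C 216)
        = (X ^ 3 * (X - C 216)) * (X - C 108) ^ 2 by ring]
    exact rootMultiplicity_mul_X_sub_C_pow_of_not_isRoot (by norm_num) 2
  · rw [show (X : ℝ[X]) ^ 3 * (X - C 108) ^ 2 * (X - C 216)
        = (X ^ 3 * (X - C 108) ^ 2) * (X - C 216) ^ 1 by ring]
    exact rootMultiplicity_mul_X_sub_C_pow_of_not_isRoot (by norm_num) 1
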